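/- arXiv:2308.13907 — 3 statements merged into one kernel-verified Lean document; each statement's English description precedes it below -/
import Mathlib

section
/- Let E be a Banach space and let (α_g)_{g∈G} be a family of linear contractions on E indexed by an amenable locally compact second countable semigroup G with left-right invariant measure m and a Følner sequence (K_n), satisfying α_g ∘ α_h = α_{gh} and continuity of g ↦ α_g(ξ) for each ξ. Define A_n(ξ) = (1/m(K_n)) ∫_{K_n} α_g(ξ) dm(g). Then the following are equivalent: (1) for every ξ ∈ E there exists a fixed point ξ̄ ∈ E^G with lim_n A_n ξ = ξ̄ in norm; (2) for every ξ ∈ E there exist ξ̄ ∈ E^G and a subsequence (n_k) with A_{n_k} ξ → ξ̄ weakly; (3) for every ξ ∈ E, E^G ∩ weak-closure of conv{α_g ξ : g ∈ G} is nonempty; (4) for every ξ ∈ E, E^G ∩ norm-closure of conv{α_g ξ : g ∈ G} is nonempty. -/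
open MeasureTheory Filter Topology

/-- The Følner ergodic averages `A_n(ξ) = (1/m(K_n)) ∫_{K_n} α_g ξ dm(g)`. -/
noncomputable def ergAvg {E : Type*} [NormedAddCommGroup E] [NormedSpace ℝ E]
    {G : Type*} [MeasurableSpace G] (m : Measure G) (K : ℕ → Set G)
    (α : G → E →L[ℝ] E) (n : ℕ) (ξ : E) : E :=
  (m (K n)).toReal⁻¹ • ∫ g in K n, α g ξ ∂m

/-- Membership in the weak closure of a set `S ⊆ E`. -/
def InWeakClosure {E : Type*} [NormedAddCommGroup E] [NormedSpace ℝ E]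
    (S : Set E) (x : E) : Prop :=
  ∀ (s : Finset (E →L[ℝ] ℝ)) (ε : ℝ), 0 < ε → ∃ y ∈ S, ∀ Λ ∈ s, |Λ x - Λ y| < ε

/-! The implications 1 ⇒ 2 ⇒ 3 ⇒ 4 are soft: the averages lie in the closed convex hull of the
orbit, and by Hahn–Banach a convex set has the same weak and norm closure. For 4 ⇒ 1, the
averages are uniformly 1-Lipschitz linear maps, so the set of `ζ` with `A_n ζ - A_n ξ → 0` is
closed and convex. By the Følner property it contains every `α_h ξ`: testing against a norming
functional, `∫_{K_n} α_{gh} ξ - ∫_{K_n} α_g ξ` is bounded by `2 ‖ξ‖ m(K_n h \ K_n)`. Hence it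
contains the closed convex hull of the orbit, in particular the fixed point `ξ'`, and
`A_n ξ' = ξ'`. -/

open scoped ENNReal

section ImageInvariantMeasure

variable {X : Type*} [MeasurableSpace X] {μ : Measure X}

theorem measure_preimage_inter_le_of_measure_image_eq {T : X → X}
    (hT : ∀ B, μ (T '' B) = μ B) (A S : Set X) :
    μ (T ⁻¹' S ∩ A) ≤ μ (S ∩ A) + μ (T '' A \ A) := by
  calc μ (T ⁻¹' S ∩ A) = μ (S ∩ T '' A) := by rw [← hT, Set.image_preimage_inter]
    _ ≤ μ (S ∩ A ∪ T '' A \ A) := measure_mono fun x ⟨hxS, hxA⟩ => by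
        by_cases hx : x ∈ A
        · exact Or.inl ⟨hxS, hx⟩
        · exact Or.inr ⟨hxA, hx⟩
    _ ≤ μ (S ∩ A) + μ (T '' A \ A) := measure_union_le _ _

theorem integral_le_integral_add_of_measure_lt_le {u v : X → ℝ} {M : ℝ} {δ : ℝ≥0∞}
    (hu : Integrable u μ) (hv : AEMeasurable v μ) (hu0 : ∀ x, 0 ≤ u x) (hv0 : ∀ x, 0 ≤ v x)
    (hvM : ∀ x, v x ≤ M) (hM : 0 ≤ M) (hδ : δ ≠ ⊤)
    (hlevel : ∀ t, μ {x | t < v x} ≤ μ {x | t < u x} + δ) :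
    ∫ x, v x ∂μ ≤ ∫ x, u x ∂μ + δ.toReal * M := by
  have hlevel' : ∀ t ∈ Set.Ioi (0 : ℝ),
      μ {x | t < v x} ≤ μ {x | t < u x} + (Set.Ioc 0 M).indicator (fun _ => δ) t := by
    intro t ht
    by_cases htM : t ≤ M
    · rw [Set.indicator_of_mem (Set.mem_Ioc.2 ⟨ht, htM⟩)]
      exact hlevel t
    · have : {x | t < v x} = ∅ :=
        Set.eq_empty_of_forall_notMem fun x hx => htM ((le_of_lt hx).trans (hvM x))
      simp [this]
  have hlint : ∫⁻ x, ENNReal.ofReal (v x) ∂μ ≤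
      ∫⁻ x, ENNReal.ofReal (u x) ∂μ + δ * ENNReal.ofReal M := by
    rw [lintegral_eq_lintegral_meas_lt μ (.of_forall hv0) hv,
      lintegral_eq_lintegral_meas_lt μ (.of_forall hu0) hu.aemeasurable]
    calc ∫⁻ t in Set.Ioi 0, μ {x | t < v x}
        ≤ ∫⁻ t in Set.Ioi 0, (μ {x | t < u x} + (Set.Ioc 0 M).indicator (fun _ => δ) t) :=
          setLIntegral_mono' measurableSet_Ioi hlevel'
      _ = (∫⁻ t in Set.Ioi 0, μ {x | t < u x}) + δ * ENNReal.ofReal M := by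
          rw [lintegral_add_right _ (measurable_const.indicator measurableSet_Ioc),
            lintegral_indicator measurableSet_Ioc, setLIntegral_const,
            Measure.restrict_apply measurableSet_Ioc,
            Set.inter_eq_left.2 Set.Ioc_subset_Ioi_self, Real.volume_Ioc, sub_zero]
  have hfin : ∫⁻ x, ENNReal.ofReal (u x) ∂μ + δ * ENNReal.ofReal M ≠ ⊤ :=
    ENNReal.add_ne_top.2 ⟨hu.lintegral_lt_top.ne, ENNReal.mul_ne_top hδ ENNReal.ofReal_ne_top⟩
  rw [integral_eq_lintegral_of_nonneg_ae (.of_forall hv0) hv.aestronglyMeasurable,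
    integral_eq_lintegral_of_nonneg_ae (.of_forall hu0) hu.aestronglyMeasurable]
  refine (ENNReal.toReal_mono hfin hlint).trans_eq ?_
  rw [ENNReal.toReal_add hu.lintegral_lt_top.ne (ENNReal.mul_ne_top hδ ENNReal.ofReal_ne_top),
    ENNReal.toReal_mul, ENNReal.toReal_ofReal hM]

/-- `T` need not be measurable, so there is no change of variables; but the superlevel sets of
`f ∘ T` are preimages of those of `f`, and the layer-cake formula only needs their measures. -/
theorem setIntegral_comp_le_setIntegral_add {T : X → X} (hT : ∀ B, μ (T '' B) = μ B)
    {f : X → ℝ} {c : ℝ} (hf : Measurable f) (hfT : Measurable fun x => f (T x))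
    (hfc : ∀ x, |f x| ≤ c) (hc : 0 ≤ c) {A : Set X} (hA : μ A ≠ ⊤) :
    ∫ x in A, f (T x) ∂μ ≤ ∫ x in A, f x ∂μ + (μ (T '' A \ A)).toReal * (2 * c) := by
  have : IsFiniteMeasure (μ.restrict A) := isFiniteMeasure_restrict.2 hA
  have hδ : μ (T '' A \ A) ≠ ⊤ := ne_top_of_le_ne_top (hT A ▸ hA) (measure_mono Set.sdiff_subset)
  have hfi : Integrable f (μ.restrict A) := .of_bound hf.aestronglyMeasurable c (.of_forall hfc)
  have hfTi : Integrable (fun x => f (T x)) (μ.restrict A) :=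
    .of_bound hfT.aestronglyMeasurable c (.of_forall fun x => hfc (T x))
  have hlevel : ∀ t, μ.restrict A {x | t < f (T x) + c} ≤
      μ.restrict A {x | t < f x + c} + μ (T '' A \ A) := fun t => by
    rw [Measure.restrict_apply (measurableSet_lt measurable_const (hfT.add_const c))]
    exact (measure_preimage_inter_le_of_measure_image_eq hT A {y | t < f y + c}).trans
      (add_le_add_left (Measure.le_restrict_apply _ _) _)
  have key := integral_le_integral_add_of_measure_lt_le (μ := μ.restrict A)
    (u := fun x => f x + c) (v := fun x => f (T x) + c) (M := 2 * c)
    (hfi.add (integrable_const c)) (hfT.add_const c).aemeasurable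
    (fun x => by linarith [neg_abs_le (f x), hfc x])
    (fun x => by linarith [neg_abs_le (f (T x)), hfc (T x)])
    (fun x => by linarith [le_abs_self (f (T x)), hfc (T x)]) (by linarith) hδ hlevel
  rw [integral_add hfTi (integrable_const c), integral_add hfi (integrable_const c)] at key
  linarith

theorem norm_setIntegral_comp_sub_setIntegral_le {E : Type*} [NormedAddCommGroup E]
    [NormedSpace ℝ E] [CompleteSpace E] {T : X → X} (hT : ∀ B, μ (T '' B) = μ B)
    {F : X → E} {c : ℝ} (hF : StronglyMeasurable F) (hFT : StronglyMeasurable fun x => F (T x))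
    (hFc : ∀ x, ‖F x‖ ≤ c) (hc : 0 ≤ c) {A : Set X} (hA : μ A ≠ ⊤) :
    ‖∫ x in A, F (T x) ∂μ - ∫ x in A, F x ∂μ‖ ≤ (μ (T '' A \ A)).toReal * (2 * c) := by
  have : IsFiniteMeasure (μ.restrict A) := isFiniteMeasure_restrict.2 hA
  have hFi : Integrable F (μ.restrict A) := .of_bound hF.aestronglyMeasurable c (.of_forall hFc)
  have hFTi : Integrable (fun x => F (T x)) (μ.restrict A) :=
    .of_bound hFT.aestronglyMeasurable c (.of_forall fun x => hFc (T x))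
  obtain ⟨Λ, hΛ, hΛw⟩ := exists_dual_vector'' ℝ (∫ x in A, F (T x) ∂μ - ∫ x in A, F x ∂μ)
  have hΛF : ∀ x, |Λ (F x)| ≤ c := fun x =>
    (Λ.le_of_opNorm_le hΛ (F x)).trans (by rw [one_mul]; exact hFc x)
  calc ‖∫ x in A, F (T x) ∂μ - ∫ x in A, F x ∂μ‖
      = ∫ x in A, Λ (F (T x)) ∂μ - ∫ x in A, Λ (F x) ∂μ := by
        rw [Λ.integral_comp_comm hFTi, Λ.integral_comp_comm hFi, ← map_sub, hΛw]; rfl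
    _ ≤ (μ (T '' A \ A)).toReal * (2 * c) := by
        linarith [setIntegral_comp_le_setIntegral_add hT
          (Λ.continuous.comp_stronglyMeasurable hF).measurable
          (Λ.continuous.comp_stronglyMeasurable hFT).measurable hΛF hc hA]

end ImageInvariantMeasure

section ErgodicAverage

variable {E : Type*} [NormedAddCommGroup E] [NormedSpace ℝ E] {G : Type*} [MeasurableSpace G]
  {m : Measure G} {K : ℕ → Set G} {α : G → E →L[ℝ] E}

theorem ergAvg_smul (n : ℕ) (c : ℝ) (ξ : E) :
    ergAvg m K α n (c • ξ) = c • ergAvg m K α n ξ := by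
  simp only [ergAvg, map_smul, integral_smul, smul_comm c]

variable [TopologicalSpace G] [SecondCountableTopology G] [OpensMeasurableSpace G]

theorem integrableOn_orbit (hcontr : ∀ g, ‖α g‖ ≤ 1) (hcont : ∀ ξ : E, Continuous fun g => α g ξ)
    (ξ : E) {A : Set G} (hA : m A ≠ ⊤) : IntegrableOn (fun g => α g ξ) A m :=
  .of_bound hA.lt_top (hcont ξ).aestronglyMeasurable ‖ξ‖
    (.of_forall fun g => by simpa using (α g).le_of_opNorm_le (hcontr g) ξ)

theorem ergAvg_add (hcontr : ∀ g, ‖α g‖ ≤ 1) (hcont : ∀ ξ : E, Continuous fun g => α g ξ)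
    {n : ℕ} (hK : m (K n) ≠ ⊤) (ξ η : E) :
    ergAvg m K α n (ξ + η) = ergAvg m K α n ξ + ergAvg m K α n η := by
  simp only [ergAvg, map_add, ← smul_add]
  rw [integral_add (integrableOn_orbit hcontr hcont ξ hK) (integrableOn_orbit hcontr hcont η hK)]

theorem ergAvg_sub (hcontr : ∀ g, ‖α g‖ ≤ 1) (hcont : ∀ ξ : E, Continuous fun g => α g ξ)
    {n : ℕ} (hK : m (K n) ≠ ⊤) (ξ η : E) :
    ergAvg m K α n (ξ - η) = ergAvg m K α n ξ - ergAvg m K α n η :=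
  eq_sub_of_add_eq (by rw [← ergAvg_add hcontr hcont hK, sub_add_cancel])

theorem convex_setOf_tendsto_ergAvg_sub (hcontr : ∀ g, ‖α g‖ ≤ 1)
    (hcont : ∀ ξ : E, Continuous fun g => α g ξ) (hK : ∀ n, m (K n) ≠ ⊤) (ξ : E) :
    Convex ℝ {ζ | Tendsto (fun n => ergAvg m K α n ζ - ergAvg m K α n ξ) atTop (𝓝 0)} := by
  intro ζ hζ η hη a b _ _ hab
  have hsplit : ∀ n, ergAvg m K α n (a • ζ + b • η) - ergAvg m K α n ξ =
      a • (ergAvg m K α n ζ - ergAvg m K α n ξ) + b • (ergAvg m K α n η - ergAvg m K α n ξ) :=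
    fun n => by
      rw [ergAvg_add hcontr hcont (hK n), ergAvg_smul, ergAvg_smul]
      linear_combination (norm := module) hab • ergAvg m K α n ξ
  simpa only [Set.mem_ofPred_eq, hsplit, smul_zero, add_zero] using
    (hζ.const_smul a).add (hη.const_smul b)

variable [CompleteSpace E]

theorem ergAvg_mem_of_convex (hcontr : ∀ g, ‖α g‖ ≤ 1)
    (hcont : ∀ ξ : E, Continuous fun g => α g ξ) {n : ℕ} (hK₀ : m (K n) ≠ 0)
    (hK : m (K n) ≠ ⊤) {ξ : E} {S : Set E} (hS : Convex ℝ S) (hSc : IsClosed S)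
    (horb : ∀ g, α g ξ ∈ S) : ergAvg m K α n ξ ∈ S := by
  have h := hS.set_average_mem hSc hK₀ hK (.of_forall horb) (integrableOn_orbit hcontr hcont ξ hK)
  rwa [setAverage_eq] at h

theorem ergAvg_mem_closure_convexHull (hcontr : ∀ g, ‖α g‖ ≤ 1)
    (hcont : ∀ ξ : E, Continuous fun g => α g ξ) {n : ℕ} (hK₀ : m (K n) ≠ 0)
    (hK : m (K n) ≠ ⊤) (ξ : E) :
    ergAvg m K α n ξ ∈ closure (convexHull ℝ (Set.range fun g => α g ξ)) :=
  ergAvg_mem_of_convex hcontr hcont hK₀ hK (convex_convexHull ℝ _).closure isClosed_closure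
    fun g => subset_closure (subset_convexHull ℝ _ ⟨g, rfl⟩)

theorem ergAvg_of_forall_apply_eq (hcontr : ∀ g, ‖α g‖ ≤ 1)
    (hcont : ∀ ξ : E, Continuous fun g => α g ξ) {n : ℕ} (hK₀ : m (K n) ≠ 0)
    (hK : m (K n) ≠ ⊤) {ξ : E} (hξ : ∀ g, α g ξ = ξ) : ergAvg m K α n ξ = ξ :=
  ergAvg_mem_of_convex hcontr hcont hK₀ hK (convex_singleton ξ) isClosed_singleton hξ

theorem lipschitzWith_ergAvg (hcontr : ∀ g, ‖α g‖ ≤ 1)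
    (hcont : ∀ ξ : E, Continuous fun g => α g ξ) {n : ℕ} (hK₀ : m (K n) ≠ 0)
    (hK : m (K n) ≠ ⊤) : LipschitzWith 1 (ergAvg m K α n) := by
  refine .of_dist_le_mul fun ξ η => ?_
  rw [dist_eq_norm, dist_eq_norm, ← ergAvg_sub hcontr hcont hK, NNReal.coe_one, one_mul,
    ← mem_closedBall_zero_iff]
  exact ergAvg_mem_of_convex hcontr hcont hK₀ hK (convex_closedBall 0 _)
    Metric.isClosed_closedBall fun g => mem_closedBall_zero_iff.2 <| by
      simpa using (α g).le_of_opNorm_le (hcontr g) (ξ - η)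

theorem isClosed_setOf_tendsto_ergAvg_sub (hcontr : ∀ g, ‖α g‖ ≤ 1)
    (hcont : ∀ ξ : E, Continuous fun g => α g ξ) (hK₀ : ∀ n, m (K n) ≠ 0)
    (hK : ∀ n, m (K n) ≠ ⊤) (ξ : E) :
    IsClosed {ζ | Tendsto (fun n => ergAvg m K α n ζ - ergAvg m K α n ξ) atTop (𝓝 0)} := by
  refine (LipschitzWith.uniformEquicontinuous _ 1 fun n => .of_dist_le_mul fun ζ η => ?_)
    |>.equicontinuous.isClosed_setOfPred_tendsto continuous_const
  rw [dist_sub_right]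
  exact (lipschitzWith_ergAvg hcontr hcont (hK₀ n) (hK n)).dist_le_mul ζ η

variable [Semigroup G]

theorem tendsto_ergAvg_apply_sub_ergAvg (hcontr : ∀ g, ‖α g‖ ≤ 1)
    (hcont : ∀ ξ : E, Continuous fun g => α g ξ) (hact : ∀ g h : G, (α g).comp (α h) = α (g * h))
    (hK : ∀ n, m (K n) ≠ ⊤) {h : G} (hinv : ∀ B, m ((· * h) '' B) = m B)
    (hFol : Tendsto (fun n => m (symmDiff (K n) ((· * h) '' K n)) / m (K n)) atTop (𝓝 0))
    (ξ : E) : Tendsto (fun n => ergAvg m K α n (α h ξ) - ergAvg m K α n ξ) atTop (𝓝 0) := by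
  set r : ℕ → ℝ≥0∞ := fun n => m ((· * h) '' K n \ K n) / m (K n)
  have hr : Tendsto (fun n => (r n).toReal) atTop (𝓝 0) :=
    (ENNReal.tendsto_toReal ENNReal.zero_ne_top).comp <|
      tendsto_of_tendsto_of_tendsto_of_le_of_le tendsto_const_nhds hFol (fun _ => zero_le)
        fun n => ENNReal.div_le_div_right
          (measure_mono (le_sup_right.trans_eq (symmDiff_def (K n) _).symm)) _
  have hshift : ∀ g, α g (α h ξ) = α (g * h) ξ := fun g => by rw [← hact]; rfl
  have hbound : ∀ n,
      ‖ergAvg m K α n (α h ξ) - ergAvg m K α n ξ‖ ≤ (r n).toReal * (2 * ‖ξ‖) := by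
    intro n
    have hT := norm_setIntegral_comp_sub_setIntegral_le hinv (hcont ξ).stronglyMeasurable
      (by simpa only [hshift] using (hcont (α h ξ)).stronglyMeasurable)
      (fun g => by simpa using (α g).le_of_opNorm_le (hcontr g) ξ) (norm_nonneg ξ) (hK n)
    simp only [ergAvg, hshift, ← smul_sub, norm_smul, Real.norm_eq_abs, abs_inv,
      ENNReal.abs_toReal]
    rw [ENNReal.toReal_div, div_eq_inv_mul, mul_assoc]
    exact mul_le_mul_of_nonneg_left hT (by positivity)
  exact squeeze_zero_norm hbound (by simpa using hr.mul_const (2 * ‖ξ‖))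

theorem tendsto_ergAvg_of_mem_closure_convexHull (hcontr : ∀ g, ‖α g‖ ≤ 1)
    (hcont : ∀ ξ : E, Continuous fun g => α g ξ) (hact : ∀ g h : G, (α g).comp (α h) = α (g * h))
    (hK₀ : ∀ n, m (K n) ≠ 0) (hK : ∀ n, m (K n) ≠ ⊤) (hinv : ∀ h B, m ((· * h) '' B) = m B)
    (hFol : ∀ h : G,
      Tendsto (fun n => m (symmDiff (K n) ((· * h) '' K n)) / m (K n)) atTop (𝓝 0))
    {ξ ξ' : E} (hfix : ∀ g, α g ξ' = ξ')
    (hmem : ξ' ∈ closure (convexHull ℝ (Set.range fun g => α g ξ))) :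
    Tendsto (fun n => ergAvg m K α n ξ) atTop (𝓝 ξ') := by
  have horbit : Set.range (fun g => α g ξ) ⊆
      {ζ | Tendsto (fun n => ergAvg m K α n ζ - ergAvg m K α n ξ) atTop (𝓝 0)} :=
    Set.range_subset_iff.2 fun h =>
      tendsto_ergAvg_apply_sub_ergAvg hcontr hcont hact hK (hinv h) (hFol h) ξ
  have hξ' := closure_minimal
    (convexHull_min horbit (convex_setOf_tendsto_ergAvg_sub hcontr hcont hK ξ))
    (isClosed_setOf_tendsto_ergAvg_sub hcontr hcont hK₀ hK ξ) hmem
  simp only [Set.mem_ofPred_eq, ergAvg_of_forall_apply_eq hcontr hcont (hK₀ _) (hK _) hfix] at hξ'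
  simpa using (tendsto_const_nhds (x := ξ')).sub hξ'

end ErgodicAverage

section WeakClosure

variable {E : Type*} [NormedAddCommGroup E] [NormedSpace ℝ E] {S : Set E} {x : E}

theorem InWeakClosure.of_tendsto {ι : Type*} {l : Filter ι} [l.NeBot] {y : ι → E}
    (hy : ∀ i, y i ∈ closure S) (hlim : ∀ Λ : E →L[ℝ] ℝ, Tendsto (fun i => Λ (y i)) l (𝓝 (Λ x))) :
    InWeakClosure S x := by
  intro s ε hε
  set U := ⋂ Λ ∈ s, {z : E | |Λ x - Λ z| < ε}
  have hU : IsOpen U :=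
    isOpen_biInter_finset fun Λ _ => isOpen_lt (by fun_prop) continuous_const
  have hyU : ∀ᶠ i in l, y i ∈ U := by
    simp only [U, Set.mem_iInter₂]
    refine (eventually_all_finset s).2 fun Λ _ => ?_
    filter_upwards [Metric.tendsto_nhds.1 (hlim Λ) ε hε] with i hi
    rwa [Real.dist_eq, abs_sub_comm] at hi
  obtain ⟨i, hi⟩ := hyU.exists
  obtain ⟨z, hzU, hzS⟩ := mem_closure_iff.1 (hy i) U hU hi
  exact ⟨z, hzS, by simpa only [U, Set.mem_iInter₂, Set.mem_ofPred_eq] using hzU⟩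

theorem InWeakClosure.mem_closure_of_convex (hS : Convex ℝ S) (hx : InWeakClosure S x) :
    x ∈ closure S := by
  by_contra hnot
  obtain ⟨f, u, hfx, hfS⟩ :=
    geometric_hahn_banach_point_closed hS.closure isClosed_closure hnot
  obtain ⟨y, hy, hfy⟩ := hx {f} (u - f x) (by linarith)
  have := hfS y (subset_closure hy)
  linarith [(abs_sub_lt_iff.1 (hfy f (Finset.mem_singleton_self f))).2]

end WeakClosure

theorem mean_ergodic_theorem_tfae_general
    {E : Type*} [NormedAddCommGroup E] [NormedSpace ℝ E] [CompleteSpace E]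
    {G : Type*} [Semigroup G] [TopologicalSpace G]
    [SecondCountableTopology G]
    [MeasurableSpace G] [BorelSpace G]
    (m : Measure G)
    (hminv : ∀ (g : G) (B : Set G), m ((g * ·) '' B) = m B ∧ m ((· * g) '' B) = m B)
    (K : ℕ → Set G)
    (hKpos : ∀ n, 0 < m (K n)) (hKfin : ∀ n, m (K n) < ⊤)
    (hFolR : ∀ g : G,
      Tendsto (fun n => m (symmDiff (K n) ((· * g) '' K n)) / m (K n)) atTop (nhds 0))
    (α : G → E →L[ℝ] E)
    (hact : ∀ g h : G, (α g).comp (α h) = α (g * h))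
    (hcontr : ∀ g : G, ‖α g‖ ≤ 1)
    (hcont : ∀ ξ : E, Continuous fun g => α g ξ) :
    List.TFAE
      [ -- (1) norm convergence of the ergodic averages to a fixed point
        ∀ ξ : E, ∃ ξ' : E, (∀ g : G, α g ξ' = ξ') ∧
          Tendsto (fun n => ergAvg m K α n ξ) atTop (nhds ξ'),
        -- (2) weak convergence along a subsequence to a fixed point
        ∀ ξ : E, ∃ ξ' : E, (∀ g : G, α g ξ' = ξ') ∧
          ∃ nk : ℕ → ℕ, StrictMono nk ∧
            ∀ Λ : E →L[ℝ] ℝ,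
              Tendsto (fun k => Λ (ergAvg m K α (nk k) ξ)) atTop (nhds (Λ ξ')),
        -- (3) a fixed point in the weak closure of the convex hull of the orbit
        ∀ ξ : E, ∃ ξ' : E, (∀ g : G, α g ξ' = ξ') ∧
          InWeakClosure (convexHull ℝ (Set.range fun g : G => α g ξ)) ξ',
        -- (4) a fixed point in the norm closure of the convex hull of the orbit
        ∀ ξ : E, ∃ ξ' : E, (∀ g : G, α g ξ' = ξ') ∧
          ξ' ∈ closure (convexHull ℝ (Set.range fun g : G => α g ξ)) ] := by
  have hK₀ : ∀ n, m (K n) ≠ 0 := fun n => (hKpos n).ne'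
  have hK : ∀ n, m (K n) ≠ ⊤ := fun n => (hKfin n).ne
  tfae_have 1 → 2 := fun h ξ => by
    obtain ⟨ξ', hfix, hlim⟩ := h ξ
    exact ⟨ξ', hfix, id, strictMono_id, fun Λ => (Λ.continuous.tendsto ξ').comp hlim⟩
  tfae_have 2 → 3 := fun h ξ => by
    obtain ⟨ξ', hfix, nk, -, hlim⟩ := h ξ
    exact ⟨ξ', hfix, .of_tendsto (l := atTop)
      (fun k => ergAvg_mem_closure_convexHull hcontr hcont (hK₀ (nk k)) (hK (nk k)) ξ) hlim⟩
  tfae_have 3 → 4 := fun h ξ => by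
    obtain ⟨ξ', hfix, hweak⟩ := h ξ
    exact ⟨ξ', hfix, hweak.mem_closure_of_convex (convex_convexHull ℝ _)⟩
  tfae_have 4 → 1 := fun h ξ => by
    obtain ⟨ξ', hfix, hmem⟩ := h ξ
    exact ⟨ξ', hfix, tendsto_ergAvg_of_mem_closure_convexHull hcontr hcont hact hK₀ hK
      (fun g B => (hminv g B).2) hFolR hfix hmem⟩
  tfae_finish

/-- **Mean ergodic theorem.** For a contraction action of an amenable LCSH semigroup `G`
with left-right invariant measure `m` and Følner sequence `(K_n)` on a Banach space `E`,
the four statements (norm convergence of the averages to a fixed point; weak subsequential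
convergence to a fixed point; existence of a fixed point in the weak closure of the orbit's
convex hull; the same with the norm closure) are equivalent. -/
theorem mean_ergodic_theorem_tfae
    {E : Type*} [NormedAddCommGroup E] [NormedSpace ℝ E] [CompleteSpace E]
    {G : Type*} [Semigroup G] [TopologicalSpace G] [T2Space G]
    [SecondCountableTopology G] [LocallyCompactSpace G]
    [MeasurableSpace G] [BorelSpace G]
    (m : Measure G) [SigmaFinite m]
    (hminv : ∀ (g : G) (B : Set G), m ((g * ·) '' B) = m B ∧ m ((· * g) '' B) = m B)
    (K : ℕ → Set G) (hKmeas : ∀ n, MeasurableSet (K n))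
    (hKpos : ∀ n, 0 < m (K n)) (hKfin : ∀ n, m (K n) < ⊤)
    (hFolR : ∀ g : G,
      Tendsto (fun n => m (symmDiff (K n) ((· * g) '' K n)) / m (K n)) atTop (nhds 0))
    (hFolL : ∀ g : G,
      Tendsto (fun n => m (symmDiff (K n) ((g * ·) '' K n)) / m (K n)) atTop (nhds 0))
    (α : G → E →L[ℝ] E)
    (hact : ∀ g h : G, (α g).comp (α h) = α (g * h))
    (hcontr : ∀ g : G, ‖α g‖ ≤ 1)
    (hcont : ∀ ξ : E, Continuous fun g => α g ξ) :
    List.TFAE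
      [ -- (1) norm convergence of the ergodic averages to a fixed point
        ∀ ξ : E, ∃ ξ' : E, (∀ g : G, α g ξ' = ξ') ∧
          Tendsto (fun n => ergAvg m K α n ξ) atTop (nhds ξ'),
        -- (2) weak convergence along a subsequence to a fixed point
        ∀ ξ : E, ∃ ξ' : E, (∀ g : G, α g ξ' = ξ') ∧
          ∃ nk : ℕ → ℕ, StrictMono nk ∧
            ∀ Λ : E →L[ℝ] ℝ,
              Tendsto (fun k => Λ (ergAvg m K α (nk k) ξ)) atTop (nhds (Λ ξ')),
        -- (3) a fixed point in the weak closure of the convex hull of the orbit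
        ∀ ξ : E, ∃ ξ' : E, (∀ g : G, α g ξ' = ξ') ∧
          InWeakClosure (convexHull ℝ (Set.range fun g : G => α g ξ)) ξ',
        -- (4) a fixed point in the norm closure of the convex hull of the orbit
        ∀ ξ : E, ∃ ξ' : E, (∀ g : G, α g ξ' = ξ') ∧
          ξ' ∈ closure (convexHull ℝ (Set.range fun g : G => α g ξ)) ] :=
  mean_ergodic_theorem_tfae_general m hminv K hKpos hKfin hFolR α hact hcontr hcont
end

section
/- Let M be a von Neumann algebra, K a weak*-compact convex subset of the positive part of the unit ball of M*, and suppose there exist a faithful normal state τ_p on M, a projection p with τ_p(p) = 1, and 0 < ε < 1/2 such that for every μ ∈ K there is x_μ with 0 ≤ x_μ ≤ p, τ_p(x_μ) ≥ 1 − ε, and μ(x_μ) < ε/2. Then there exists a single x_ε with 0 ≤ x_ε ≤ p, τ_p(x_ε) ≥ 1 − ε, and μ(x_ε) < ε for all μ ∈ K. (Hahn–Banach separation and barycenter argument.) -/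
/-!
Pair the weak*-compact convex set `K` with the convex set `C = {x | 0 ≤ x ≤ p, Re τ_p(x) ≥ 1 - ε}`
through `(μ, x) ↦ Re μ(x)`, which is `ℝ`-bilinear and separately continuous. The hypothesis says
that every `μ ∈ K` is below `ε / 2` somewhere on `C`; by compactness finitely many points of `C`
suffice, and Sion's minimax theorem then produces one point of `C` (a convex combination of them)
where every `μ ∈ K` is below `ε / 2`. Convexity of `C` rests on `r • a ≥ 0` for `r ≥ 0 ≤ a`, which
holds because `r • a` is a conjugate of `a`.
-/

open scoped ComplexOrder
open MeasureTheory Filter Topology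

section VN
variable {M : Type*} [NormedRing M] [StarRing M] [CStarRing M] [NormedAlgebra ℂ M]
  [PartialOrder M] [StarOrderedRing M] [CompleteSpace M]

/-- `p` is an orthogonal projection. -/
def IsProjection (p : M) : Prop := p * p = p ∧ star p = p

/-- A continuous linear functional is positive if it is nonnegative on positive elements. -/
def IsPositiveFunctional (φ : M →L[ℂ] ℂ) : Prop := ∀ x : M, 0 ≤ x → 0 ≤ φ x

/-- A functional is normal if it is order continuous on increasing nets possessing a
least upper bound. -/
def IsNormalFunctional (φ : M →L[ℂ] ℂ) : Prop :=
  ∀ (ι : Type) [Preorder ι] (x : ι → M) (l : M), Monotone x → IsLUB (Set.range x) l →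
    Filter.Tendsto (fun i => φ (x i)) Filter.atTop (nhds (φ l))

/-- A positive functional is singular if it dominates no nonzero positive normal
functional: whenever `ψ` is positive normal with `φ - ψ ≥ 0`, then `ψ = 0`. -/
def IsSingularFunctional (φ : M →L[ℂ] ℂ) : Prop :=
  ∀ ψ : M →L[ℂ] ℂ, IsPositiveFunctional ψ → IsNormalFunctional ψ →
    IsPositiveFunctional (φ - ψ) → ψ = 0

/-- `e` is the support projection of the functional `φ`: the smallest projection with
`φ(e) = φ(1)`. -/
def IsSupportProjOf (φ : M →L[ℂ] ℂ) (e : M) : Prop :=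
  IsProjection e ∧ φ e = φ 1 ∧ ∀ f : M, IsProjection f → φ f = φ 1 → e ≤ f

/-- `s` is the support projection of the operator `x`: the smallest projection with
`s * x = x`. -/
def IsSupportOf (x s : M) : Prop :=
  IsProjection s ∧ s * x = x ∧ ∀ t : M, IsProjection t → t * x = x → s ≤ t

/-- The restriction of `φ` to the corner `rMr` is singular; characterised (Takesaki) by:
below every nonzero subprojection of `r` there is a nonzero subprojection on which `φ`
vanishes. -/
def IsSingularOnCorner (φ : M →L[ℂ] ℂ) (r : M) : Prop :=
  ∀ e : M, IsProjection e → e ≤ r → e ≠ 0 →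
    ∃ f : M, IsProjection f ∧ f ≤ e ∧ f ≠ 0 ∧ φ f = 0

end VN

section RealScalars

variable {A : Type*} [AddCommGroup A] [Module ℝ A] [TopologicalSpace A] [ContinuousSMul ℝ A]
  [T2Space A] [StarAddMonoid A] [ContinuousStar A]

-- No `StarModule ℝ A` is assumed: continuity of `star` is what makes it `ℝ`-linear.
theorem star_real_smul (c : ℝ) (a : A) : star (c • a) = c • star a :=
  map_real_smul (starAddEquiv : A ≃+ A) continuous_star c a

end RealScalars

section StarOrderedAlgebra

variable {A : Type*} [Ring A] [PartialOrder A] [StarRing A] [StarOrderedRing A] [Algebra ℝ A]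
  [TopologicalSpace A] [ContinuousSMul ℝ A] [T2Space A] [ContinuousStar A]

theorem real_smul_nonneg {r : ℝ} (hr : 0 ≤ r) {a : A} (ha : 0 ≤ a) : 0 ≤ r • a := by
  have hconj := star_left_conjugate_nonneg ha (√r • (1 : A))
  rwa [star_real_smul, star_one, smul_mul_assoc, one_mul, mul_smul_comm, mul_one, smul_smul,
    Real.mul_self_sqrt hr] at hconj

instance StarOrderedRing.posSMulMono_real : PosSMulMono ℝ A :=
  .of_smul_nonneg fun _ hr _ ha => real_smul_nonneg hr ha

end StarOrderedAlgebra

theorem IsProjection.nonneg {M : Type*} [NormedRing M] [StarRing M] [PartialOrder M]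
    [StarOrderedRing M] {p : M} (hp : IsProjection p) : 0 ≤ p := by
  simpa only [hp.1, hp.2] using star_mul_self_nonneg p

theorem LinearMap.exists_mem_forall_lt_of_isCompact {E F : Type*} [AddCommGroup E] [Module ℝ E]
    [TopologicalSpace E] [IsTopologicalAddGroup E] [ContinuousSMul ℝ E] [AddCommGroup F]
    [Module ℝ F] [TopologicalSpace F] [IsTopologicalAddGroup F] [ContinuousSMul ℝ F]
    (B : E →ₗ[ℝ] F →ₗ[ℝ] ℝ) (hBl : ∀ y, Continuous fun x => B x y) (hBr : ∀ x, Continuous (B x))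
    {X : Set E} {Y : Set F} (hXne : X.Nonempty) (hXc : IsCompact X) (hXconv : Convex ℝ X)
    (hYconv : Convex ℝ Y) {δ : ℝ} (h : ∀ x ∈ X, ∃ y ∈ Y, B x y < δ) :
    ∃ y ∈ Y, ∀ x ∈ X, B x y < δ := by
  obtain ⟨s, hsY, hs, hXs⟩ := hXc.elim_finite_subcover_image (b := Y)
    (c := fun y => {x | B x y < δ}) (fun y _ => isOpen_lt (hBl y) continuous_const)
    fun x hx => by simpa only [Set.mem_iUnion₂, Set.mem_ofPred_eq, exists_prop] using h x hx
  have hXs_neg : ∀ x ∈ X, ∃ y ∈ s, -δ < -B x y := fun x hx => by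
    simpa only [Set.mem_iUnion₂, Set.mem_ofPred_eq, exists_prop, neg_lt_neg_iff] using hXs hx
  simpa only [neg_lt_neg_iff] using
    Sion.exists_lt_iInf_of_lt_iInf_of_finite (f := fun x y => -B x y) hXne hXc
    (fun y _ => (hBl y).neg.lowerSemicontinuous.lowerSemicontinuousOn X)
    (fun y _ => ((-B.flip y).convexOn hXconv).quasiconvexOn) hYconv
    (fun x _ => (hBr x).neg.upperSemicontinuous.upperSemicontinuousOn Y)
    (fun x _ => ((-B x).concaveOn hYconv).quasiconcaveOn) hXconv hs hsY hXs_neg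

section WeakDual

variable {E : Type*} [NormedAddCommGroup E] [NormedSpace ℂ E]

noncomputable def WeakDual.rePairing : WeakDual ℂ E →ₗ[ℝ] E →ₗ[ℝ] ℝ :=
  LinearMap.mk₂ ℝ (fun φ x => (φ x).re) (fun _ _ _ => Complex.add_re _ _)
    (fun c φ x => Complex.smul_re c (φ x)) (by simp) (by simp [← Complex.coe_smul])

theorem Convex.toWeakDual_image {K : Set (StrongDual ℂ E)} (hK : Convex ℝ K) :
    Convex ℝ (⇑StrongDual.toWeakDual '' K) := by
  rintro _ ⟨a, ha, rfl⟩ _ ⟨b, hb, rfl⟩ s t hs ht hst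
  exact ⟨s • a + t • b, hK ha hb hs ht hst, rfl⟩

end WeakDual

theorem exists_uniform_small_element_of_weakStarCompact_convex_general
    {M : Type*} [NormedRing M] [StarRing M] [CStarRing M] [NormedAlgebra ℂ M]
    [PartialOrder M] [StarOrderedRing M]
    (K : Set (M →L[ℂ] ℂ))
    (hKconv : Convex ℝ K)
    (hKcpt : IsCompact (⇑StrongDual.toWeakDual '' K))
    (τp : M →L[ℂ] ℂ)
    (p : M) (hp : IsProjection p) (hτp : τp p = 1)
    (ε : ℝ) (hε0 : 0 < ε)
    (hyp : ∀ μ ∈ K, ∃ x : M, 0 ≤ x ∧ x ≤ p ∧ 1 - ε ≤ (τp x).re ∧ (μ x).re < ε / 2) :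
    ∃ x : M, 0 ≤ x ∧ x ≤ p ∧ 1 - ε ≤ (τp x).re ∧ ∀ μ ∈ K, (μ x).re < ε := by
  rcases K.eq_empty_or_nonempty with rfl | hKne
  · exact ⟨p, hp.nonneg, le_rfl, by simp [hτp, hε0.le], by simp⟩
  have hC : Convex ℝ (Set.Icc 0 p ∩ {x | 1 - ε ≤ (τp x).re}) :=
    (convex_Icc 0 p).inter <| convex_halfSpace_ge ⟨fun x y => by simp, fun c x => by simp⟩ _
  obtain ⟨x, ⟨⟨hx0, hxp⟩, hxτ⟩, hx⟩ := WeakDual.rePairing.exists_mem_forall_lt_of_isCompact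
    (fun x => Complex.continuous_re.comp (WeakDual.eval_continuous x))
    (fun φ => Complex.continuous_re.comp φ.continuous) (hKne.image _) hKcpt
    hKconv.toWeakDual_image hC    (δ := ε / 2) (by
      rintro _ ⟨μ, hμ, rfl⟩
      obtain ⟨x, hx0, hxp, hxτ, hμx⟩ := hyp μ hμ
      exact ⟨x, ⟨⟨hx0, hxp⟩, hxτ⟩, hμx⟩)
  exact ⟨x, hx0, hxp, hxτ, fun μ hμ => (hx _ ⟨μ, hμ, rfl⟩).trans (half_lt_self hε0)⟩

/-- **Hahn–Banach / barycenter lemma.** Let `K` be a weak*-compact convex subset of the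
positive part of the unit ball of `M*`, `τ_p` a faithful normal state, `p` a projection
with `τ_p(p) = 1` and `0 < ε < 1/2`. If for every `μ ∈ K` there exists `x_μ` with
`0 ≤ x_μ ≤ p`, `τ_p(x_μ) ≥ 1 − ε` and `μ(x_μ) < ε/2`, then there is a single `x_ε` with
`0 ≤ x_ε ≤ p`, `τ_p(x_ε) ≥ 1 − ε` and `μ(x_ε) < ε` for all `μ ∈ K`. -/
theorem exists_uniform_small_element_of_weakStarCompact_convex
    {M : Type*} [NormedRing M] [StarRing M] [CStarRing M] [NormedAlgebra ℂ M]
    [PartialOrder M] [StarOrderedRing M] [CompleteSpace M]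
    (K : Set (M →L[ℂ] ℂ))
    (hKpos : ∀ μ ∈ K, IsPositiveFunctional μ ∧ ‖μ‖ ≤ 1)
    (hKconv : Convex ℝ K)
    (hKcpt : IsCompact (⇑StrongDual.toWeakDual '' K))
    (τp : M →L[ℂ] ℂ) (hτpos : IsPositiveFunctional τp)
    (hτnormal : IsNormalFunctional τp)
    (hτfaithful : ∀ x : M, 0 ≤ x → τp x = 0 → x = 0)
    (hτstate : τp 1 = 1)
    (p : M) (hp : IsProjection p) (hτp : τp p = 1)
    (ε : ℝ) (hε0 : 0 < ε) (hε : ε < 1 / 2)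
    (hyp : ∀ μ ∈ K, ∃ x : M, 0 ≤ x ∧ x ≤ p ∧ 1 - ε ≤ (τp x).re ∧ (μ x).re < ε / 2) :
    ∃ x : M, 0 ≤ x ∧ x ≤ p ∧ 1 - ε ≤ (τp x).re ∧ ∀ μ ∈ K, (μ x).re < ε :=
  exists_uniform_small_element_of_weakStarCompact_convex_general K hKconv hKcpt τp p hp hτp ε hε0
    hyp
end

section
/- Let U be a unitary on a Hilbert space H, ε ∈ H a vector, and n₁ < n₂ < ⋯ a sequence such that U^{n_i}η ⟂ U^{n_j}η for i ≠ j, where ‖η‖ = 1. Let P_η denote the rank-one projection onto ℂη and α(x) = UxU*. Then the Cesàro averages A_n(P_η) = (1/n) Σ_{k=0}^{n−1} α^k(P_η) satisfy ‖A_n(P_η)‖ → 0 as n → ∞, i.e., P_η is a weakly wandering projection for the automorphism α of B(H). -/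
open Filter Topology

/-!
With `v k = U ^ k η`, the operator `α ^ k (P_η)` is the rank-one projection onto `v k`, so
`⟪(n • A_n) x, x⟫ = ∑_{k<n} |⟪v k, x⟫|²` and `n • A_n` is positive. Since `U ^ k` maps the
orthonormal family `(v (n_i))ᵢ` onto `(v (k + n_i))ᵢ`, Bessel's inequality bounds every window
`∑_{i ≤ m} |⟪v (k + n_i), x⟫|²` by `‖x‖²`. Averaging over the `m + 1` shifts of `[0, n)` by
`n_0, …, n_m` gives `(m + 1) ‖n • A_n‖ ≤ n_0 + ⋯ + n_m + n`, hence `limsup ‖A_n‖ ≤ 1 / (m + 1)`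
for every `m`.
-/

open Finset InnerProductSpace

theorem Finset.card_mul_sum_range_le_of_sum_shift_le {ι : Type*} (s : Finset ι) (a : ι → ℕ)
    {f : ℕ → ℝ} {B : ℝ} (hf₀ : ∀ j, 0 ≤ f j) (hfB : ∀ j, f j ≤ B)
    (hwindow : ∀ k, ∑ i ∈ s, f (k + a i) ≤ B) (n : ℕ) :
    #s * ∑ j ∈ range n, f j ≤ (∑ i ∈ s, (a i : ℝ)) * B + n * B := by
  have hshift (i : ι) : ∑ j ∈ range n, f j ≤ a i * B + ∑ k ∈ range n, f (k + a i) :=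
    calc ∑ j ∈ range n, f j ≤ ∑ j ∈ range (a i + n), f j :=
          sum_le_sum_of_subset_of_nonneg (range_subset_range.2 (by omega)) fun j _ _ => hf₀ j
      _ = ∑ j ∈ range (a i), f j + ∑ k ∈ range n, f (a i + k) := sum_range_add f _ _
      _ ≤ a i * B + ∑ k ∈ range n, f (k + a i) := by
          simp_rw [add_comm (a i)]
          gcongr
          simpa using sum_le_card_nsmul (range (a i)) f B fun j _ => hfB j
  calc (#s : ℝ) * ∑ j ∈ range n, f j = ∑ i ∈ s, ∑ j ∈ range n, f j := by
        rw [sum_const, nsmul_eq_mul]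
    _ ≤ ∑ i ∈ s, (a i * B + ∑ k ∈ range n, f (k + a i)) := sum_le_sum fun i _ => hshift i
    _ = (∑ i ∈ s, (a i : ℝ)) * B + ∑ k ∈ range n, ∑ i ∈ s, f (k + a i) := by
        rw [sum_add_distrib, sum_mul, sum_comm]
    _ ≤ (∑ i ∈ s, (a i : ℝ)) * B + n * B := by
        gcongr
        simpa using sum_le_card_nsmul (range n) _ B fun k _ => hwindow k

theorem tendsto_zero_of_le_div_add {u δ : ℕ → ℝ} (hu : ∀ n, 0 ≤ u n)
    (hδ : Tendsto δ atTop (𝓝 0)) (hbound : ∀ m, ∃ C, ∀ n, u n ≤ C / n + δ m) :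
    Tendsto u atTop (𝓝 0) := by
  refine tendsto_order.2 ⟨fun a ha => .of_forall fun n => ha.trans_le (hu n), fun ε hε => ?_⟩
  obtain ⟨m, hm⟩ := (hδ.eventually (gt_mem_nhds (half_pos hε))).exists
  obtain ⟨C, hC⟩ := hbound m
  filter_upwards [(tendsto_const_div_atTop_nhds_zero_nat C).eventually
    (gt_mem_nhds (half_pos hε))] with n hn
  linarith [hC n]

section InnerProductSpace

variable {𝕜 E : Type*} [RCLike 𝕜] [NormedAddCommGroup E] [InnerProductSpace 𝕜 E]

theorem Orthonormal.map_of_mem_unitary [CompleteSpace E] {ι : Type*} {v : ι → E}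
    (hv : Orthonormal 𝕜 v) {u : E →L[𝕜] E} (hu : u ∈ unitary (E →L[𝕜] E)) :
    Orthonormal 𝕜 fun i => u (v i) :=
  ⟨fun i => by rw [ContinuousLinearMap.norm_map_of_mem_unitary hu, hv.1 i],
    fun i j hij => (ContinuousLinearMap.inner_map_map_of_mem_unitary hu _ _).trans (hv.2 hij)⟩

namespace ContinuousLinearMap

theorem IsPositive.norm_le_of_re_inner_le {T : E →L[𝕜] E} (hT : T.IsPositive) {C : ℝ}
    (hC : 0 ≤ C) (h : ∀ x, RCLike.re (inner 𝕜 (T x) x) ≤ C * ‖x‖ ^ 2) : ‖T‖ ≤ C := by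
  rw [T.norm_eq_iSup_rayleighQuotient hT.isSymmetric]
  refine ciSup_le fun x => ?_
  rw [rayleighQuotient, reApplyInnerSelf_apply,
    abs_of_nonneg (div_nonneg (hT.re_inner_nonneg_left x) (by positivity))]
  exact div_le_of_le_mul₀ (by positivity) hC (h x)

theorem re_inner_sum_rankOne_self_apply {ι : Type*} (s : Finset ι) (v : ι → E) (x : E) :
    RCLike.re (inner 𝕜 ((∑ i ∈ s, rankOne 𝕜 (v i) (v i)) x) x) =
      ∑ i ∈ s, ‖inner 𝕜 (v i) x‖ ^ 2 := by
  simp only [_root_.sum_apply, rankOne_apply, sum_inner, inner_smul_left, RCLike.conj_mul,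
    map_sum, ← RCLike.ofReal_pow, RCLike.ofReal_re]

theorem norm_sum_rankOne_self_le {ι : Type*} (s : Finset ι) (v : ι → E) {C : ℝ} (hC : 0 ≤ C)
    (h : ∀ x, ∑ i ∈ s, ‖inner 𝕜 (v i) x‖ ^ 2 ≤ C * ‖x‖ ^ 2) :
    ‖∑ i ∈ s, rankOne 𝕜 (v i) (v i)‖ ≤ C :=
  (isPositive_sum s fun i _ => isPositive_rankOne_self (v i)).norm_le_of_re_inner_le hC
    fun x => (re_inner_sum_rankOne_self_apply s v x).trans_le (h x)

theorem mul_rankOne_self_mul_star [CompleteSpace E] (A : E →L[𝕜] E) (x : E) :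
    A * rankOne 𝕜 x x * star A = rankOne 𝕜 (A x) (A x) := by
  rw [star_eq_adjoint, mul_def, mul_def, comp_rankOne, rankOne_comp, adjoint_adjoint]

theorem norm_sum_range_rankOne_pow_apply_le [CompleteSpace E] {U : E →L[𝕜] E}
    (hU : U ∈ unitary (E →L[𝕜] E)) {η : E} (hη : ‖η‖ = 1) {ι : Type*} {a : ι → ℕ}
    (ha : Orthonormal 𝕜 fun i => (U ^ a i) η) {s : Finset ι} (hs : s.Nonempty) (n : ℕ) :
    ‖∑ k ∈ range n, rankOne 𝕜 ((U ^ k) η) ((U ^ k) η)‖ ≤ ((∑ i ∈ s, (a i : ℝ)) + n) / #s := by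
  refine norm_sum_rankOne_self_le _ _ (by positivity) fun x => ?_
  have hcoeff (j : ℕ) : ‖inner 𝕜 ((U ^ j) η) x‖ ^ 2 ≤ ‖x‖ ^ 2 := by
    gcongr
    calc _ ≤ ‖(U ^ j) η‖ * ‖x‖ := norm_inner_le_norm _ _
      _ = ‖x‖ := by rw [norm_map_of_mem_unitary (pow_mem hU j), hη, one_mul]
  have hwindow (k : ℕ) : ∑ i ∈ s, ‖inner 𝕜 ((U ^ (k + a i)) η) x‖ ^ 2 ≤ ‖x‖ ^ 2 := by
    simpa only [pow_add, mul_apply_eq_comp] using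
      (ha.map_of_mem_unitary (pow_mem hU k)).sum_inner_products_le (s := s) x
  have hcount := card_mul_sum_range_le_of_sum_shift_le s a (fun _ => sq_nonneg _) hcoeff hwindow n
  rw [div_mul_eq_mul_div, le_div_iff₀ (by simpa using hs.card_pos)]
  linarith

end ContinuousLinearMap

end InnerProductSpace

theorem rank_one_projection_weakly_wandering_general
    {H : Type*} [NormedAddCommGroup H] [InnerProductSpace ℂ H] [CompleteSpace H]
    (U : H →L[ℂ] H) (hU : U ∈ unitary (H →L[ℂ] H))
    (η : H) (hη : ‖η‖ = 1)
    (nseq : ℕ → ℕ)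
    (horth : ∀ i j : ℕ, i ≠ j →
      (inner ℂ ((U ^ nseq i) η) ((U ^ nseq j) η) : ℂ) = 0) :
    Tendsto (fun n : ℕ =>
        ‖(n : ℝ)⁻¹ • ∑ k ∈ Finset.range n,
          (U ^ k) * ((innerSL ℂ η).smulRight η) * star (U ^ k)‖)
      atTop (nhds 0) := by
  have hηorth : Orthonormal ℂ fun i => (U ^ nseq i) η :=
    ⟨fun i => by rw [ContinuousLinearMap.norm_map_of_mem_unitary (pow_mem hU _), hη], horth⟩
  refine tendsto_zero_of_le_div_add (fun n => norm_nonneg _)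
    tendsto_one_div_add_atTop_nhds_zero_nat
    fun m => ⟨(∑ i ∈ range (m + 1), (nseq i : ℝ)) / (m + 1), fun n => ?_⟩
  have hsum := ContinuousLinearMap.norm_sum_range_rankOne_pow_apply_le hU hη hηorth
    (nonempty_range_add_one (n := m)) n
  simp_rw [card_range, Nat.cast_succ, ← ContinuousLinearMap.mul_rankOne_self_mul_star] at hsum
  rw [norm_smul, Real.norm_eq_abs, abs_inv, Nat.abs_cast]
  calc (n : ℝ)⁻¹ * _ ≤ (n : ℝ)⁻¹ * (((∑ i ∈ range (m + 1), (nseq i : ℝ)) + n) / (m + 1)) := by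
        gcongr; exact hsum
    _ ≤ _ := by
        rw [add_div, mul_add, inv_mul_eq_div, ← mul_div_assoc]
        gcongr
        exact inv_mul_le_one_of_le₀ le_rfl n.cast_nonneg

/-- **Weakly wandering rank-one projections.** Let `U` be a unitary on a Hilbert space `H`,
`η` a unit vector and `n₁ < n₂ < ⋯` a sequence with `U^{n_i} η ⟂ U^{n_j} η` for `i ≠ j`.
Let `P_η` be the rank-one projection onto `ℂη` and `α(x) = U x U*`. Then the Cesàro
averages `A_n(P_η) = (1/n) Σ_{k<n} α^k(P_η)` satisfy `‖A_n(P_η)‖ → 0`, i.e. `P_η` is a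
weakly wandering projection for the automorphism `α` of `B(H)`. -/
theorem rank_one_projection_weakly_wandering
    {H : Type*} [NormedAddCommGroup H] [InnerProductSpace ℂ H] [CompleteSpace H]
    (U : H →L[ℂ] H) (hU : U ∈ unitary (H →L[ℂ] H))
    (η : H) (hη : ‖η‖ = 1)
    (nseq : ℕ → ℕ) (hmono : StrictMono nseq)
    (horth : ∀ i j : ℕ, i ≠ j →
      (inner ℂ ((U ^ nseq i) η) ((U ^ nseq j) η) : ℂ) = 0) :
    Tendsto (fun n : ℕ =>
        ‖(n : ℝ)⁻¹ • ∑ k ∈ Finset.range n,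
          (U ^ k) * ((innerSL ℂ η).smulRight η) * star (U ^ k)‖)
      atTop (nhds 0) :=
  rank_one_projection_weakly_wandering_general U hU η hη nseq horth
end
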